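/- arXiv:1506.04730 — 2 statements merged into one kernel-verified Lean document; each statement's English description precedes it below -/
import Mathlib

section
/- Hexahedron gauge identity: for the four light-cone maps ⟨ξ⟩, ⟨ξ₀⟩, ⟨ξ₁⟩, ⟨ξ₀₁⟩ of a Bianchi quadrilateral one has, for all t, Γ_{⟨ξ₀⟩}^{⟨ξ₀₁⟩}(1 − t/μ₁) ∘ Γ_{⟨ξ⟩}^{⟨ξ₀⟩}(1 − t/μ₀) = Γ_{⟨ξ₁⟩}^{⟨ξ₀₁⟩}(1 − t/μ₀) ∘ Γ_{⟨ξ⟩}^{⟨ξ₁⟩}(1 − t/μ₁). -/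
noncomputable section

variable {V : Type*} [NormedAddCommGroup V] [NormedSpace ℝ V]

/-- The skew endomorphism a∧b : y ↦ (y,a)b − (y,b)a of a space with bilinear form B. -/
def wedgeMap (B : LinearMap.BilinForm ℝ V) (a b : V) : V →ₗ[ℝ] V where
  toFun y := B y a • b - B y b • a
  map_add' y z := by simp [add_smul]; abel
  map_smul' c y := by simp [mul_smul]; module

/-- The transformation Γ_{⟨ξ⟩}^{⟨ξ̂⟩}(r): multiplication by 1/r on ⟨ξ⟩, by 1 on
⟨ξ,ξ̂⟩^⊥ and by r on ⟨ξ̂⟩, for lightlike ξ, ξ̂ with B ξ ξ̂ ≠ 0. -/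
def Gamma (B : LinearMap.BilinForm ℝ V) (ξ ξh : V) (r : ℝ) : V →ₗ[ℝ] V where
  toFun y := y + (((1/r - 1) * B y ξh) / B ξ ξh) • ξ + (((r - 1) * B y ξ) / B ξ ξh) • ξh
  map_add' y z := by simp [mul_add, add_div, add_smul]; abel
  map_smul' c y := by simp [mul_div_assoc, mul_assoc, mul_smul]; module


/-! Γ depends on ξ₀₁ only through the line ⟨ξ₀₁⟩, so we may take
ξ₀₁ = Γ_{⟨ξ⟩}^{⟨ξ₀⟩}(1 − μ₁/μ₀) ξ₁ = αξ + βξ₀ + ξ₁. Each side is then y ↦ y + Σ cᵢⱼ (y, wᵢ) wⱼ with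
wᵢ, wⱼ ∈ {ξ, ξ₀, ξ₁}, and the identity amounts to the equality of these nine coefficients, rational
functions of t, μ₀, μ₁ and the pairings of ξ, ξ₀, ξ₁. The pairings (ξ₀, ξ₀₁) and (ξ₁, ξ₀₁) occur as
denominators, so they are put in closed form before the expansion. -/

@[simp]
theorem Gamma_apply (B : LinearMap.BilinForm ℝ V) (a b : V) (r : ℝ) (y : V) :
    Gamma B a b r y = y + ((1 / r - 1) * B y b / B a b) • a + ((r - 1) * B y a / B a b) • b :=
  rfl

theorem Gamma_smul_right (B : LinearMap.BilinForm ℝ V) (a b : V) (r : ℝ) {c : ℝ} (hc : c ≠ 0) :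
    Gamma B a (c • b) r = Gamma B a b r := by
  ext y
  simp only [Gamma_apply, map_smul, smul_eq_mul, smul_smul]
  match_scalars <;> field_simp

namespace LinearMap.BilinForm.IsSymm

variable {B : LinearMap.BilinForm ℝ V}

theorem apply_Gamma_right (hB : B.IsSymm) {a b : V} (hb : B b b = 0) (hab : B a b ≠ 0)
    (r : ℝ) (y : V) : B b (Gamma B a b r y) = r⁻¹ * B b y := by
  simp only [Gamma_apply, map_add, map_smul, smul_eq_mul, hb, hB.eq b a, hB.eq y b, mul_zero,
    add_zero]
  field_simp
  ring

theorem apply_Gamma_self (hB : B.IsSymm) (a b : V) (r : ℝ) (y : V) :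
    B y (Gamma B a b r y) = B y y + (r + r⁻¹ - 2) * B y a * B y b / B a b := by
  simp only [Gamma_apply, map_add, map_smul, smul_eq_mul, hB.eq y a, hB.eq y b]
  ring

theorem Gamma_comp_Gamma_bianchi (hB : B.IsSymm) {ξ ξ₀ ξ₁ : V} {μ₀ μ₁ t : ℝ}
    (hμ₀ : μ₀ ≠ 0) (hμ₁ : μ₁ ≠ 0) (hμ : μ₀ ≠ μ₁) (ht₀ : t ≠ μ₀) (ht₁ : t ≠ μ₁)
    (hl : B ξ ξ = 0) (hl₀ : B ξ₀ ξ₀ = 0) (hl₁ : B ξ₁ ξ₁ = 0)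
    (hp₀ : B ξ ξ₀ ≠ 0) (hp₁ : B ξ ξ₁ ≠ 0) (hp₀₁ : B ξ₀ ξ₁ ≠ 0) :
    Gamma B ξ₀ (Gamma B ξ ξ₀ (1 - μ₁ / μ₀) ξ₁) (1 - t / μ₁) ∘ₗ Gamma B ξ ξ₀ (1 - t / μ₀)
      = Gamma B ξ₁ (Gamma B ξ ξ₀ (1 - μ₁ / μ₀) ξ₁) (1 - t / μ₀) ∘ₗ Gamma B ξ ξ₁ (1 - t / μ₁) := by
  have hμ' : μ₀ - μ₁ ≠ 0 := sub_ne_zero.mpr hμ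
  have ht₀' : μ₀ - t ≠ 0 := sub_ne_zero.mpr ht₀.symm
  have ht₁' : μ₁ - t ≠ 0 := sub_ne_zero.mpr ht₁.symm
  rw [one_sub_div hμ₀, one_sub_div hμ₀, one_sub_div hμ₁]
  set η := Gamma B ξ ξ₀ ((μ₀ - μ₁) / μ₀) ξ₁ with hη
  have hη₀ : B ξ₀ η = μ₀ / (μ₀ - μ₁) * B ξ₀ ξ₁ := by
    rw [hη, hB.apply_Gamma_right hl₀ hp₀, inv_div]
  have hη₁ : B ξ₁ η = μ₁ ^ 2 / (μ₀ * (μ₀ - μ₁)) * B ξ ξ₁ * B ξ₀ ξ₁ / B ξ ξ₀ := by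
    rw [hη, hB.apply_Gamma_self, hl₁, hB.eq ξ₁ ξ, hB.eq ξ₁ ξ₀]
    field_simp
    ring
  clear_value η
  ext y
  simp only [LinearMap.comp_apply, Gamma_apply, map_add, map_smul, hη₀, hη₁]
  subst hη
  simp only [Gamma_apply, map_add, map_smul, smul_eq_mul, smul_add, smul_smul,
    hl, hl₀, hl₁, hB.eq ξ₁ ξ, hB.eq ξ₁ ξ₀]
  match_scalars <;> field_simp <;> ring

end LinearMap.BilinForm.IsSymm

theorem hexahedron_gauge_general
    (B : LinearMap.BilinForm ℝ V) (hB : B.IsSymm)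
    (ξ ξ₀ ξ₁ ξ₀₁ : V) (μ₀ μ₁ : ℝ) (hμ₀ : μ₀ ≠ 0) (hμ₁ : μ₁ ≠ 0) (hμ : μ₀ ≠ μ₁)
    (hl : B ξ ξ = 0) (hl₀ : B ξ₀ ξ₀ = 0) (hl₁ : B ξ₁ ξ₁ = 0)
    (hp₀ : B ξ ξ₀ ≠ 0) (hp₁ : B ξ ξ₁ ≠ 0) (hp₀₁ : B ξ₀ ξ₀₁ ≠ 0)
    -- cross ratio cr(⟨ξ⟩,⟨ξ₀⟩,⟨ξ₀₁⟩,⟨ξ₁⟩) = μ₁/μ₀ :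
    (hcr : ∃ c : ℝ, c ≠ 0 ∧ ξ₀₁ = c • Gamma B ξ ξ₀ (1 - μ₁/μ₀) ξ₁) :
    ∀ t : ℝ, t ≠ μ₀ → t ≠ μ₁ →
      (Gamma B ξ₀ ξ₀₁ (1 - t/μ₁)) ∘ₗ (Gamma B ξ ξ₀ (1 - t/μ₀))
        = (Gamma B ξ₁ ξ₀₁ (1 - t/μ₀)) ∘ₗ (Gamma B ξ ξ₁ (1 - t/μ₁)) := by
  intro t ht₀ ht₁
  obtain ⟨c, hc, rfl⟩ := hcr
  rw [map_smul, smul_eq_mul, hB.apply_Gamma_right hl₀ hp₀] at hp₀₁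
  rw [Gamma_smul_right _ _ _ _ hc, Gamma_smul_right _ _ _ _ hc]
  exact hB.Gamma_comp_Gamma_bianchi hμ₀ hμ₁ hμ ht₀ ht₁ hl hl₀ hl₁ hp₀ hp₁
    (right_ne_zero_of_mul (right_ne_zero_of_mul hp₀₁))

/-- the hexahedron gauge identity for a Bianchi quadrilateral. -/
theorem hexahedron_gauge
    (B : LinearMap.BilinForm ℝ V) (hB : B.IsSymm)
    (ξ ξ₀ ξ₁ ξ₀₁ : V) (μ₀ μ₁ : ℝ) (hμ₀ : μ₀ ≠ 0) (hμ₁ : μ₁ ≠ 0) (hμ : μ₀ ≠ μ₁)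
    (hl : B ξ ξ = 0) (hl₀ : B ξ₀ ξ₀ = 0) (hl₁ : B ξ₁ ξ₁ = 0) (hl₀₁ : B ξ₀₁ ξ₀₁ = 0)
    (hp₀ : B ξ ξ₀ ≠ 0) (hp₁ : B ξ ξ₁ ≠ 0) (hp₀₁ : B ξ₀ ξ₀₁ ≠ 0) (hp₁₀ : B ξ₁ ξ₀₁ ≠ 0)
    -- the four points lie on a common circle :
    (hspan : ξ₀₁ ∈ Submodule.span ℝ ({ξ, ξ₀, ξ₁} : Set V))
    -- pairwise distinct lines :
    (hd₁ : ∀ c : ℝ, ξ₀ ≠ c • ξ) (hd₂ : ∀ c : ℝ, ξ₁ ≠ c • ξ)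
    (hd₃ : ∀ c : ℝ, ξ₁ ≠ c • ξ₀) (hd₄ : ∀ c : ℝ, ξ₀₁ ≠ c • ξ)
    (hd₅ : ∀ c : ℝ, ξ₀₁ ≠ c • ξ₀) (hd₆ : ∀ c : ℝ, ξ₀₁ ≠ c • ξ₁)
    -- cross ratio cr(⟨ξ⟩,⟨ξ₀⟩,⟨ξ₀₁⟩,⟨ξ₁⟩) = μ₁/μ₀ :
    (hcr : ∃ c : ℝ, c ≠ 0 ∧ ξ₀₁ = c • Gamma B ξ ξ₀ (1 - μ₁/μ₀) ξ₁) :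
    ∀ t : ℝ, t ≠ μ₀ → t ≠ μ₁ →
      (Gamma B ξ₀ ξ₀₁ (1 - t/μ₁)) ∘ₗ (Gamma B ξ ξ₀ (1 - t/μ₀))
        = (Gamma B ξ₁ ξ₀₁ (1 - t/μ₀)) ∘ₗ (Gamma B ξ ξ₁ (1 - t/μ₁)) :=
  hexahedron_gauge_general B hB ξ ξ₀ ξ₁ ξ₀₁ μ₀ μ₁ hμ₀ hμ₁ hμ hl hl₀ hl₁ hp₀ hp₁ hp₀₁ hcr
end
end

section
/- Composition of Calapso transforms: let T^t : I → O(ℝ^{n+1,1}) trivialize the isothermic family of ⟨ξ⟩, i.e. (d/ds)∘T^t = T^t∘(D/ds)^t, and set ξ̃ = T^τ ξ. Then the isothermic family of ⟨ξ̃⟩ satisfies (D̃/ds)^t ∘ T^τ = T^τ ∘ (D/ds)^{τ+t}; consequently if T̃^t trivializes (D̃/ds)^t then T̃^t ∘ T^τ trivializes (D/ds)^{τ+t}, i.e. T̃^t T^τ = T^{τ+t} up to a constant orthogonal transformation. -/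
noncomputable section

variable {V : Type*} [NormedAddCommGroup V] [NormedSpace ℝ V]

lemma wedge_conj {V : Type*} [NormedAddCommGroup V] [NormedSpace ℝ V]
    (B : LinearMap.BilinForm ℝ V) (T : V →ₗ[ℝ] V)
    (hT : ∀ v w, B (T v) (T w) = B v w) (a b y : V) :
    T (wedgeMap B a b y) = wedgeMap B (T a) (T b) (T y) := by
  simp [wedgeMap, hT]

/-- composition of Calapso transforms. If T^t trivializes the isothermic
family of ⟨ξ⟩ and ξ̃ = T^τ ξ, then (D̃/ds)^t ∘ T^τ = T^τ ∘ (D/ds)^{τ+t}, and hence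
T̃^t ∘ T^τ trivializes (D/ds)^{τ+t}. -/
theorem calapso_composition
    (B : LinearMap.BilinForm ℝ V) (hB : B.IsSymm)
    (ξ dξ : ℝ → V) (m : ℝ → ℝ) (hm : ∀ s, m s ≠ 0)
    (hξ : ∀ s, HasDerivAt ξ (dξ s) s)
    (hlight : ∀ s, B (ξ s) (ξ s) = 0) (hperp : ∀ s, B (ξ s) (dξ s) = 0)
    (himm : ∀ s, B (dξ s) (dξ s) ≠ 0)
    (T : ℝ → ℝ → (V →ₗ[ℝ] V))
    -- T^t takes values in O(ℝ^{n+1,1}) :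
    (hTorth : ∀ t s v w, B (T t s v) (T t s w) = B v w)
    -- T^t trivializes the isothermic family: (d/ds)∘T^t = T^t∘(D/ds)^t :
    (hT : ∀ t : ℝ, ∀ v dv : ℝ → V, (∀ s, HasDerivAt v (dv s) s) → ∀ s,
      HasDerivAt (fun u => T t u (v u))
        (T t s (dv s - (2 * t / (m s * B (dξ s) (dξ s))) • wedgeMap B (ξ s) (dξ s) (v s))) s)
    (τ : ℝ) (ξt dξt : ℝ → V)
    (hξt : ∀ s, ξt s = T τ s (ξ s)) (hdξt : ∀ s, dξt s = T τ s (dξ s)) :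
    -- (i) (D̃/ds)^t ∘ T^τ = T^τ ∘ (D/ds)^{τ+t} :
    (∀ t : ℝ, ∀ v dv : ℝ → V, (∀ s, HasDerivAt v (dv s) s) → ∀ s,
      HasDerivAt (fun u => T τ u (v u))
        ((2 * t / (m s * B (dξ s) (dξ s))) • wedgeMap B (ξt s) (dξt s) (T τ s (v s))
          + T τ s (dv s - (2 * (τ + t) / (m s * B (dξ s) (dξ s))) •
              wedgeMap B (ξ s) (dξ s) (v s))) s)
    -- (ii) if T̃^t trivializes (D̃/ds)^t then T̃^t∘T^τ trivializes (D/ds)^{τ+t} :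
    ∧ (∀ Tt : ℝ → ℝ → (V →ₗ[ℝ] V),
        (∀ t : ℝ, ∀ v dv : ℝ → V, (∀ s, HasDerivAt v (dv s) s) → ∀ s,
          HasDerivAt (fun u => Tt t u (v u))
            (Tt t s (dv s - (2 * t / (m s * B (dξ s) (dξ s))) •
                wedgeMap B (ξt s) (dξt s) (v s))) s) →
        ∀ t : ℝ, ∀ v dv : ℝ → V, (∀ s, HasDerivAt v (dv s) s) → ∀ s,
          HasDerivAt (fun u => Tt t u (T τ u (v u)))
            (Tt t s (T τ s (dv s - (2 * (τ + t) / (m s * B (dξ s) (dξ s))) •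
                wedgeMap B (ξ s) (dξ s) (v s)))) s) := by
  have key : ∀ t (vs dvs : V) s,
      (2 * t / (m s * B (dξ s) (dξ s))) • wedgeMap B (ξt s) (dξt s) (T τ s vs)
        + T τ s (dvs - (2 * (τ + t) / (m s * B (dξ s) (dξ s))) •
            wedgeMap B (ξ s) (dξ s) vs)
      = T τ s (dvs - (2 * τ / (m s * B (dξ s) (dξ s))) •
            wedgeMap B (ξ s) (dξ s) vs) := by
    intro t vs dvs s
    rw [hξt, hdξt, ← wedge_conj B (T τ s) (hTorth τ s)]
    simp only [map_sub, map_smul]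
    module
  refine ⟨?_, ?_⟩
  · intro t v dv hv s
    rw [key]
    exact hT τ v dv hv s
  · intro Tt hTt t v dv hv s
    have h := hTt t (fun u => T τ u (v u))
      (fun s => T τ s (dv s - (2 * τ / (m s * B (dξ s) (dξ s))) •
          wedgeMap B (ξ s) (dξ s) (v s)))
      (fun s => hT τ v dv hv s) s
    have e : (T τ s) (dv s - (2 * τ / (m s * B (dξ s) (dξ s))) •
          wedgeMap B (ξ s) (dξ s) (v s))
        - (2 * t / (m s * B (dξ s) (dξ s))) •
            wedgeMap B (ξt s) (dξt s) (T τ s (v s))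
        = T τ s (dv s - (2 * (τ + t) / (m s * B (dξ s) (dξ s))) •
            wedgeMap B (ξ s) (dξ s) (v s)) := by
      rw [hξt, hdξt, ← wedge_conj B (T τ s) (hTorth τ s)]
      simp only [map_sub, map_smul]
      module
    rw [e] at h
    exact h
end
end
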